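/- arXiv:2208.03810 — 3 statements merged into one kernel-verified Lean document; each statement's English description precedes it below -/
import Mathlib

section
/- Let f : {0,1}^n → {0,1} be a monotone read-once DNF with m terms each containing exactly n/m variables (so every variable appears in exactly one term). Under unit costs and an arbitrary probability vector p ∈ (0,1)^n, there is a non-adaptive strategy S whose expected cost is at most (n/m) · OPT_A(f, unit costs, p). -/
open Finset

/-- The set of tested indices `T` determines `f` on input `x`:
every input agreeing with `x` on `T` gives the same function value. -/
def Determines (n : ℕ) (f : (Fin n → Bool) → Bool) (T : Finset (Fin n))
    (x : Fin n → Bool) : Prop :=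
  ∀ x' : Fin n → Bool, (∀ i ∈ T, x' i = x i) → f x' = f x

/-- The set of indices tested by the non-adaptive strategy `π` in its first `k` tests. -/
def prefixSet (n : ℕ) (π : Equiv.Perm (Fin n)) (k : ℕ) : Finset (Fin n) :=
  Finset.univ.filter (fun i => (π.symm i).val < k)

/-- The number of tests performed by the non-adaptive strategy `π` on input `x`:
the least `k` such that the first `k` tested indices determine `f` on `x`. -/
noncomputable def naSteps (n : ℕ) (f : (Fin n → Bool) → Bool)
    (π : Equiv.Perm (Fin n)) (x : Fin n → Bool) : ℕ :=
  sInf {k : ℕ | Determines n f (prefixSet n π k) x}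

/-- The cost incurred by the non-adaptive strategy `π` on input `x`, with cost vector `c`. -/
noncomputable def naCost (n : ℕ) (f : (Fin n → Bool) → Bool) (c : Fin n → ℝ)
    (π : Equiv.Perm (Fin n)) (x : Fin n → Bool) : ℝ :=
  ∑ i ∈ prefixSet n π (naSteps n f π x), c i

/-- Probability of the outcome `x` under the product distribution with parameters `p`. -/
def prodWeight (n : ℕ) (p : Fin n → ℝ) (x : Fin n → Bool) : ℝ :=
  ∏ i : Fin n, if x i then p i else 1 - p i

/-- Expected cost of the non-adaptive strategy `π`. -/
noncomputable def naExpCost (n : ℕ) (f : (Fin n → Bool) → Bool) (c : Fin n → ℝ)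
    (p : Fin n → ℝ) (π : Equiv.Perm (Fin n)) : ℝ :=
  ∑ x : Fin n → Bool, prodWeight n p x * naCost n f c π x

/-- Optimal expected cost among non-adaptive strategies. -/
noncomputable def OPTN (n : ℕ) (f : (Fin n → Bool) → Bool) (c : Fin n → ℝ)
    (p : Fin n → ℝ) : ℝ :=
  sInf { r : ℝ | ∃ π : Equiv.Perm (Fin n), r = naExpCost n f c p π }

/-- Binary decision trees over `n` variables (adaptive strategies). -/
inductive DecTree (n : ℕ) : Type
  | leaf : Bool → DecTree n
  | node : Fin n → DecTree n → DecTree n → DecTree n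

/-- Evaluation of a decision tree on an input. -/
def DecTree.eval {n : ℕ} : DecTree n → (Fin n → Bool) → Bool
  | .leaf b, _ => b
  | .node i t0 t1, x => if x i then DecTree.eval t1 x else DecTree.eval t0 x

/-- Cost of a decision tree on input `x`: the sum of the costs of the indices
labeling the internal nodes on the root-to-leaf path followed on `x`. -/
def DecTree.costOn {n : ℕ} (c : Fin n → ℝ) : DecTree n → (Fin n → Bool) → ℝ
  | .leaf _, _ => 0
  | .node i t0 t1, x =>
      c i + (if x i then DecTree.costOn c t1 x else DecTree.costOn c t0 x)

/-- The decision tree `t` computes the function `f`. -/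
def DecTree.Computes {n : ℕ} (t : DecTree n) (f : (Fin n → Bool) → Bool) : Prop :=
  ∀ x, t.eval x = f x

/-- Expected cost of an adaptive strategy (decision tree). -/
noncomputable def adExpCost (n : ℕ) (c : Fin n → ℝ) (p : Fin n → ℝ)
    (t : DecTree n) : ℝ :=
  ∑ x : Fin n → Bool, prodWeight n p x * DecTree.costOn c t x

/-- Optimal expected cost among adaptive strategies computing `f`. -/
noncomputable def OPTA (n : ℕ) (f : (Fin n → Bool) → Bool) (c : Fin n → ℝ)
    (p : Fin n → ℝ) : ℝ :=
  sInf { r : ℝ | ∃ t : DecTree n, DecTree.Computes t f ∧ r = adExpCost n c p t }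

/-- `f` is the monotone read-once DNF whose terms are the (nonempty, pairwise disjoint)
sets of variables `T 0, …, T (m-1)`. -/
def IsReadOnceDNF (n m : ℕ) (T : Fin m → Finset (Fin n))
    (f : (Fin n → Bool) → Bool) : Prop :=
  (∀ j, (T j).Nonempty) ∧
  (∀ j k, j ≠ k → Disjoint (T j) (T k)) ∧
  (∀ x, f x = true ↔ ∃ j, ∀ i ∈ T j, x i = true)

/-! Write `q j` for the probability that the term `T j` is satisfied, `w j = 1 - q j`, and
`Φ(U) = ∑_{a < #U} min {∏_{j ∈ A} w j : A ⊆ U, #A = a}`.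

Upper bound: test the terms block by block in decreasing order of `q`. If the first `a` blocks do
not decide `f`, all `a` terms are false, so the cost is at most `n/m` times the number of `a < m`
for which the first `a` terms are false. Its expectation is `(n/m) · ∑_{a < m} ∏_{first a} w`, and
sorted prefixes minimise these products, so this is `(n/m) · Φ(univ)`.

Lower bound: a decision tree computing `f` must reach a satisfied term or touch every term. With
`D` the terms touched so far and `p` the distribution conditioned on the answers so far,
`#D + Pr_p[all terms of D are false] · Φ(Dᶜ)` is a lower bound for the expected number of terms
touched in the end: it is affine in each `p i`, and touching a new term `j` can only raise it
since `Φ(U) ≤ 1 + w j · Φ(U \ {j})`. At the root it equals `Φ(univ)`, so `Φ(univ) ≤ OPT_A`. -/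

namespace DecTree

open Function

variable {n : ℕ}

lemma exists_computes_of_dependsOn (s : Finset (Fin n)) :
    ∀ g : (Fin n → Bool) → Bool, DependsOn g (s : Set (Fin n)) → ∃ t : DecTree n, t.Computes g := by
  induction s using Finset.induction_on with
  | empty => exact fun g hg => ⟨.leaf (g fun _ => false), fun x =>
      DependsOn.empty (by simpa using hg) (fun _ => false) x⟩
  | insert i s _ ih =>
    intro g hg
    have hbranch : ∀ b, DependsOn (fun x => g (update x i b)) (s : Set (Fin n)) := by
      refine fun b x y hxy => hg fun i' hi' => ?_
      rcases eq_or_ne i' i with rfl | hne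
      · simp
      · simpa [hne] using hxy i' (by simpa [hne] using hi')
    obtain ⟨t₀, ht₀⟩ := ih _ (hbranch false)
    obtain ⟨t₁, ht₁⟩ := ih _ (hbranch true)
    refine ⟨.node i t₀ t₁, fun x => ?_⟩
    rw [eval, ht₀, ht₁]
    conv_rhs => rw [← update_eq_self i x]
    cases x i <;> rfl

lemma exists_computes (g : (Fin n → Bool) → Bool) : ∃ t : DecTree n, t.Computes g :=
  exists_computes_of_dependsOn univ g (by simpa using dependsOn_univ g)

def touched {ι : Type*} [DecidableEq ι] (tm : Fin n → ι) : DecTree n → (Fin n → Bool) → Finset ι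
  | .leaf _, _ => ∅
  | .node i t₀ t₁, x => insert (tm i) (if x i then touched tm t₁ x else touched tm t₀ x)

lemma card_touched_le_costOn {ι : Type*} [DecidableEq ι] (tm : Fin n → ι) (t : DecTree n)
    (x : Fin n → Bool) : ((t.touched tm x).card : ℝ) ≤ t.costOn (fun _ => 1) x := by
  induction t with
  | leaf => simp [touched, costOn]
  | node i t₀ t₁ ih₀ ih₁ =>
    have hins : ∀ (s : Finset ι) (c : ℝ), (s.card : ℝ) ≤ c → ((insert (tm i) s).card : ℝ) ≤ 1 + c :=
      fun s c h => by
        have : ((insert (tm i) s).card : ℝ) ≤ s.card + 1 := by exact_mod_cast card_insert_le _ _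
        linarith
    simp only [touched, costOn]
    split
    · exact hins _ _ ih₁
    · exact hins _ _ ih₀

end DecTree

namespace SBFE

open Function

variable {n m : ℕ}

section ProductDistribution

noncomputable def expect (p : Fin n → ℝ) (g : (Fin n → Bool) → ℝ) : ℝ :=
  ∑ x, prodWeight n p x * g x

lemma expect_prod (p : Fin n → ℝ) (g : Fin n → Bool → ℝ) :
    expect p (fun x => ∏ i, g i (x i)) = ∏ i, ((1 - p i) * g i false + p i * g i true) := by
  simp only [expect, prodWeight, ← prod_mul_distrib]
  refine (Fintype.prod_sum fun i b => (if b then p i else 1 - p i) * g i b).symm.trans ?_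
  refine prod_congr rfl fun i _ => ?_
  simp [add_comm]

lemma expect_const (p : Fin n → ℝ) (c : ℝ) : expect p (fun _ => c) = c := by
  have h : ∑ x, prodWeight n p x = 1 := by simpa [expect] using expect_prod p fun _ _ => 1
  rw [expect, ← sum_mul, h, one_mul]

lemma prodWeight_nonneg {p : Fin n → ℝ} (hp : ∀ i, p i ∈ Set.Icc 0 1) (x : Fin n → Bool) :
    0 ≤ prodWeight n p x :=
  prod_nonneg fun i _ => by
    have := hp i
    split <;> simp only [Set.mem_Icc] at this <;> linarith

lemma expect_mono {p : Fin n → ℝ} (hp : ∀ i, p i ∈ Set.Icc 0 1) {g g' : (Fin n → Bool) → ℝ}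
    (h : ∀ x, g x ≤ g' x) : expect p g ≤ expect p g' :=
  sum_le_sum fun x _ => mul_le_mul_of_nonneg_left (h x) (prodWeight_nonneg hp x)

lemma expect_sum_mul {ι : Type*} (p : Fin n → ℝ) (s : Finset ι) (c : ι → ℝ)
    (g : ι → (Fin n → Bool) → ℝ) :
    expect p (fun x => ∑ a ∈ s, c a * g a x) = ∑ a ∈ s, c a * expect p (g a) := by
  simp only [expect, mul_sum]
  rw [sum_comm]
  exact sum_congr rfl fun a _ => sum_congr rfl fun x _ => by ring

lemma prodWeight_ne_zero_iff {p : Fin n → ℝ} {x : Fin n → Bool} :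
    prodWeight n p x ≠ 0 ↔ ∀ i, (if x i then p i else 1 - p i) ≠ 0 := by
  simp [prodWeight, prod_ne_zero_iff]

lemma prodWeight_update (p : Fin n → ℝ) (i : Fin n) (b : ℝ) (x : Fin n → Bool) :
    prodWeight n (update p i b) x =
      (if x i then b else 1 - b) * ∏ i' ∈ univ.erase i, if x i' then p i' else 1 - p i' := by
  rw [prodWeight, ← mul_prod_erase _ _ (mem_univ i), update_self]
  congr 1
  exact prod_congr rfl fun i' hi' => by rw [update_of_ne (ne_of_mem_erase hi')]

lemma prodWeight_eq_mul_prod_erase (p : Fin n → ℝ) (i : Fin n) (x : Fin n → Bool) :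
    prodWeight n p x =
      (if x i then p i else 1 - p i) * ∏ i' ∈ univ.erase i, if x i' then p i' else 1 - p i' := by
  conv_lhs => rw [← update_eq_self i p]
  exact prodWeight_update p i (p i) x

lemma expect_eq_cond (p : Fin n → ℝ) (i : Fin n) (g : (Fin n → Bool) → ℝ) :
    expect p g = p i * expect (update p i 1) g
      + (1 - p i) * expect (update p i 0) g := by
  simp only [expect, mul_sum, ← sum_add_distrib]
  refine sum_congr rfl fun x _ => ?_
  rw [prodWeight_eq_mul_prod_erase p i, prodWeight_update, prodWeight_update]
  split <;> ring

lemma expect_update_one_ite (p : Fin n → ℝ) (i : Fin n) (g₀ g₁ : (Fin n → Bool) → ℝ) :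
    expect (update p i 1) (fun x => if x i then g₁ x else g₀ x) =
      expect (update p i 1) g₁ := by
  refine sum_congr rfl fun x _ => ?_
  rw [prodWeight_update]
  cases h : x i <;> simp [h]

lemma expect_update_zero_ite (p : Fin n → ℝ) (i : Fin n) (g₀ g₁ : (Fin n → Bool) → ℝ) :
    expect (update p i 0) (fun x => if x i then g₁ x else g₀ x) =
      expect (update p i 0) g₀ := by
  refine sum_congr rfl fun x _ => ?_
  rw [prodWeight_update]
  cases h : x i <;> simp [h]

lemma prodWeight_ne_zero_of_update_one {p : Fin n → ℝ} {i : Fin n} (hpi : p i ≠ 0)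
    {x : Fin n → Bool} (hx : prodWeight n (update p i 1) x ≠ 0) :
    x i = true ∧ prodWeight n p x ≠ 0 := by
  rw [prodWeight_update] at hx
  rw [prodWeight_eq_mul_prod_erase p i]
  cases h : x i <;> simp_all

lemma prodWeight_ne_zero_of_update_zero {p : Fin n → ℝ} {i : Fin n} (hpi : p i ≠ 1)
    {x : Fin n → Bool} (hx : prodWeight n (update p i 0) x ≠ 0) :
    x i = false ∧ prodWeight n p x ≠ 0 := by
  rw [prodWeight_update] at hx
  rw [prodWeight_eq_mul_prod_erase p i]
  have : 1 - p i ≠ 0 := sub_ne_zero.2 (Ne.symm hpi)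
  cases h : x i <;> simp_all

end ProductDistribution

section Terms

variable (T : Fin m → Finset (Fin n))

def termProb (p : Fin n → ℝ) (j : Fin m) : ℝ := ∏ i ∈ T j, p i

/-- `1` if `x` satisfies the term `T j`, else `0`; a product, so that its expectation
factorises. -/
def termIndicator (j : Fin m) (x : Fin n → Bool) : ℝ := ∏ i ∈ T j, if x i then 1 else 0

def unsatIndicator (A : Finset (Fin m)) (x : Fin n → Bool) : ℝ :=
  ∏ j ∈ A, (1 - termIndicator T j x)

def unsatProb (p : Fin n → ℝ) (A : Finset (Fin m)) : ℝ := ∏ j ∈ A, (1 - termProb T p j)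

variable {T}

lemma termProb_mem_Icc {p : Fin n → ℝ} (hp : ∀ i, p i ∈ Set.Icc 0 1) (j : Fin m) :
    termProb T p j ∈ Set.Icc 0 1 :=
  ⟨prod_nonneg fun i _ => (hp i).1, prod_le_one (fun i _ => (hp i).1) fun i _ => (hp i).2⟩

lemma termProb_mem_Ioo {p : Fin n → ℝ} (hp : ∀ i, p i ∈ Set.Ioo 0 1) {j : Fin m}
    (hj : (T j).Nonempty) : termProb T p j ∈ Set.Ioo 0 1 := by
  refine ⟨prod_pos fun i _ => (hp i).1, ?_⟩
  obtain ⟨i, hi⟩ := hj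
  rw [termProb, ← mul_prod_erase _ _ hi]
  calc p i * ∏ i' ∈ (T j).erase i, p i' ≤ p i * 1 :=
        mul_le_mul_of_nonneg_left
          (prod_le_one (fun i' _ => (hp i').1.le) fun i' _ => (hp i').2.le) (hp i).1.le
    _ < 1 := by rw [mul_one]; exact (hp i).2

lemma termProb_update_of_notMem (p : Fin n → ℝ) {i : Fin n} {j : Fin m} (h : i ∉ T j) (b : ℝ) :
    termProb T (update p i b) j = termProb T p j :=
  prod_congr rfl fun i' hi' => update_of_ne (by rintro rfl; exact h hi') _ _

lemma unsatProb_mem_Icc {p : Fin n → ℝ} (hp : ∀ i, p i ∈ Set.Icc 0 1) (A : Finset (Fin m)) :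
    unsatProb T p A ∈ Set.Icc 0 1 := by
  have h := termProb_mem_Icc (T := T) hp
  exact ⟨prod_nonneg fun j _ => by linarith [(h j).2],
    prod_le_one (fun j _ => by linarith [(h j).2]) fun j _ => by linarith [(h j).1]⟩

lemma unsatIndicator_nonneg (A : Finset (Fin m)) (x : Fin n → Bool) :
    0 ≤ unsatIndicator T A x :=
  prod_nonneg fun j _ => sub_nonneg.2 <| prod_le_one (fun i _ => by split <;> norm_num)
    fun i _ => by split <;> norm_num

lemma unsatIndicator_eq_one {A : Finset (Fin m)} {x : Fin n → Bool}
    (h : ∀ j ∈ A, ¬ ∀ i ∈ T j, x i = true) : unsatIndicator T A x = 1 := by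
  refine prod_eq_one fun j hj => ?_
  obtain ⟨i, hi, hxi⟩ := not_forall₂.1 (h j hj)
  rw [termIndicator, prod_eq_zero hi (by simp [hxi]), sub_zero]

lemma expect_prod_termIndicator (hdisj : Pairwise (Disjoint on T)) (p : Fin n → ℝ)
    (t : Finset (Fin m)) :
    expect p (fun x => ∏ j ∈ t, termIndicator T j x) = ∏ j ∈ t, termProb T p j := by
  have hd : (t : Set (Fin m)).PairwiseDisjoint T := fun j _ k _ hjk => hdisj hjk
  simp only [termIndicator, termProb, ← prod_biUnion hd, ← prod_ite_mem_eq (t.biUnion T)]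
  rw [expect_prod p fun i b => if i ∈ t.biUnion T then (if b then 1 else 0) else 1]
  refine prod_congr rfl fun i _ => ?_
  split <;> simp

lemma expect_unsatIndicator (hdisj : Pairwise (Disjoint on T)) (p : Fin n → ℝ)
    (A : Finset (Fin m)) : expect p (unsatIndicator T A) = unsatProb T p A := by
  have hexpand : ∀ g : Fin m → ℝ,
      ∏ j ∈ A, (1 - g j) = ∑ t ∈ A.powerset, (∏ j ∈ t, (-1 : ℝ)) * ∏ j ∈ t, g j := by
    intro g
    simp_rw [sub_eq_neg_add, prod_add_one, ← prod_mul_distrib, neg_one_mul]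
  unfold unsatIndicator
  simp only [unsatProb, hexpand, ← expect_prod_termIndicator hdisj]
  exact expect_sum_mul p _ _ _

end Terms

section MinProd

variable {ι : Type*} (w : ι → ℝ)

/-- Junk value `0` when `#U < a`. -/
noncomputable def minProd (U : Finset ι) (a : ℕ) : ℝ :=
  if h : a ≤ U.card then
    (U.powersetCard a).inf' (powersetCard_nonempty.2 h) fun A => ∏ j ∈ A, w j
  else 0

noncomputable def phi (U : Finset ι) : ℝ := ∑ a ∈ range U.card, minProd w U a

variable {w}

lemma minProd_nonneg (hw : ∀ j, 0 ≤ w j) (U : Finset ι) (a : ℕ) : 0 ≤ minProd w U a := by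
  unfold minProd
  split
  · exact le_inf' _ _ fun A _ => prod_nonneg fun j _ => hw j
  · exact le_rfl

lemma minProd_zero (U : Finset ι) : minProd w U 0 = 1 := by
  simp [minProd]

lemma minProd_succ_le [DecidableEq ι] {U : Finset ι} {j : ι} (hj : j ∈ U) {a : ℕ}
    (ha : a + 1 ≤ U.card) :
    minProd w U (a + 1) ≤ w j * minProd w (U.erase j) a := by
  have ha' : a ≤ (U.erase j).card := by rw [card_erase_of_mem hj]; omega
  rw [minProd, minProd, dif_pos ha, dif_pos ha']
  obtain ⟨A, hA, hAmin⟩ := exists_mem_eq_inf' (powersetCard_nonempty.2 ha')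
    fun A => ∏ j ∈ A, w j
  rw [mem_powersetCard] at hA
  have hjA : j ∉ A := fun h => (mem_erase.1 (hA.1 h)).1 rfl
  rw [hAmin, ← prod_insert hjA]
  refine inf'_le _ (mem_powersetCard.2 ⟨insert_subset hj (hA.1.trans (erase_subset j U)), ?_⟩)
  rw [card_insert_of_notMem hjA, hA.2]

lemma phi_nonneg (hw : ∀ j, 0 ≤ w j) (U : Finset ι) : 0 ≤ phi w U :=
  sum_nonneg fun a _ => minProd_nonneg hw U a

lemma phi_le_one_add_mul [DecidableEq ι] {U : Finset ι} {j : ι} (hj : j ∈ U) :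
    phi w U ≤ 1 + w j * phi w (U.erase j) := by
  obtain ⟨u, hu⟩ : ∃ u, U.card = u + 1 := ⟨U.card - 1, by have := card_pos.2 ⟨j, hj⟩; omega⟩
  rw [phi, phi, card_erase_of_mem hj, hu, sum_range_succ', minProd_zero, add_comm,
    Nat.add_sub_cancel, mul_sum]
  gcongr with a ha
  exact minProd_succ_le hj (by rw [hu]; exact Nat.succ_le_succ (mem_range.1 ha).le)

end MinProd

lemma pairwise_disjoint_of_mem_iff {T : Fin m → Finset (Fin n)} {tm : Fin n → Fin m}
    (hT : ∀ i j, i ∈ T j ↔ tm i = j) : Pairwise (Disjoint on T) :=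
  fun j k hjk => disjoint_left.2 fun i hj hk => hjk (((hT i j).1 hj).symm.trans ((hT i k).1 hk))

section LowerBound

variable {T : Fin m → Finset (Fin n)} {f : (Fin n → Bool) → Bool} {w : Fin m → ℝ}
  {p : Fin n → ℝ} {D : Finset (Fin m)}

/-- A lower bound for the expected number of terms a tree touches once it has touched those in
`D`, when the variables have distribution `p` and the untouched terms are false with
probabilities `w`. -/
noncomputable def potential (T : Fin m → Finset (Fin n)) (w : Fin m → ℝ) (p : Fin n → ℝ)
    (D : Finset (Fin m)) : ℝ :=
  D.card + unsatProb T p D * phi w Dᶜ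

lemma potential_le_potential_insert (hw : ∀ j, 0 ≤ w j) (hp : ∀ i, p i ∈ Set.Icc 0 1)
    (hagree : ∀ j ∉ D, 1 - termProb T p j = w j) (j : Fin m) :
    potential T w p D ≤ potential T w p (insert j D) := by
  by_cases hj : j ∈ D
  · rw [insert_eq_of_mem hj]
  have hW := unsatProb_mem_Icc (T := T) hp D
  have hphi := phi_le_one_add_mul (w := w) (mem_compl.2 hj)
  have hphi₀ := phi_nonneg hw (Dᶜ.erase j)
  have hW' : unsatProb T p (insert j D) = w j * unsatProb T p D := by
    rw [unsatProb, prod_insert hj, hagree j hj, unsatProb]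
  rw [potential, potential, card_insert_of_notMem hj, hW', compl_insert]
  push_cast
  nlinarith [mul_le_mul_of_nonneg_left hphi hW.1, mul_nonneg (hw j) hphi₀, hW.2]

lemma potential_eq_cond (hdisj : Pairwise (Disjoint on T)) (w : Fin m → ℝ) (p : Fin n → ℝ)
    (D : Finset (Fin m)) (i : Fin n) :
    potential T w p D = p i * potential T w (update p i 1) D
      + (1 - p i) * potential T w (update p i 0) D := by
  simp only [potential, ← expect_unsatIndicator hdisj]
  rw [expect_eq_cond p i (unsatIndicator T D)]
  ring

lemma unsatProb_eq_zero_of_const (hDNF : ∀ x, f x = true ↔ ∃ j, ∀ i ∈ T j, x i = true)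
    (hw : ∀ j, w j ∈ Set.Ioo 0 1) (hagree : ∀ j ∉ D, 1 - termProb T p j = w j) {b : Bool}
    (hb : ∀ x, prodWeight n p x ≠ 0 → b = f x) {j : Fin m} (hj : j ∉ D) :
    unsatProb T p D = 0 := by
  -- The leaf is `true` since the most-true input in the support satisfies the term `j`; hence
  -- the most-false input in the support satisfies some term, which then has probability `1`.
  have hx₁ : prodWeight n p (fun i => decide (p i ≠ 0)) ≠ 0 :=
    prodWeight_ne_zero_iff.2 fun i => by by_cases h : p i = 0 <;> simp [h]
  have hx₀ : prodWeight n p (fun i => decide (p i = 1)) ≠ 0 := by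
    refine prodWeight_ne_zero_iff.2 fun i => ?_
    rcases eq_or_ne (p i) 1 with h | h
    · simp [h]
    · simp [h, sub_ne_zero.2 h.symm]
  have hpos : ∀ i ∈ T j, p i ≠ 0 := by
    have : termProb T p j ≠ 0 := by linarith [hagree j hj, (hw j).2]
    exact prod_ne_zero_iff.1 this
  have hb₁ : b = true := (hb _ hx₁).trans ((hDNF _).2 ⟨j, fun i hi => by simpa using hpos i hi⟩)
  obtain ⟨j₀, hj₀⟩ := (hDNF _).1 ((hb _ hx₀).symm.trans hb₁)
  have hq : termProb T p j₀ = 1 := prod_eq_one fun i hi => by simpa using hj₀ i hi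
  have hj₀D : j₀ ∈ D := by
    by_contra h
    linarith [hagree j₀ h, (hw j₀).1]
  exact prod_eq_zero hj₀D (by rw [hq, sub_self])

theorem potential_le_expect_card_touched {tm : Fin n → Fin m} (hT : ∀ i j, i ∈ T j ↔ tm i = j)
    (hDNF : ∀ x, f x = true ↔ ∃ j, ∀ i ∈ T j, x i = true) (hw : ∀ j, w j ∈ Set.Ioo 0 1)
    (t : DecTree n) (p : Fin n → ℝ) (D : Finset (Fin m)) (hp : ∀ i, p i ∈ Set.Icc 0 1)
    (hagree : ∀ j ∉ D, 1 - termProb T p j = w j)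
    (ht : ∀ x, prodWeight n p x ≠ 0 → t.eval x = f x) :
    potential T w p D ≤ expect p fun x => ((D ∪ t.touched tm x).card : ℝ) := by
  induction t generalizing p D with
  | leaf b =>
    simp only [DecTree.touched, union_empty, expect_const, potential]
    rcases Dᶜ.eq_empty_or_nonempty with hD | ⟨j, hj⟩
    · simp [hD, phi]
    · simp [unsatProb_eq_zero_of_const hDNF hw hagree ht (mem_compl.1 hj)]
  | node i t₀ t₁ ih₀ ih₁ =>
    set D' := insert (tm i) D
    have hp' : ∀ b ∈ Set.Icc (0 : ℝ) 1, ∀ i', update p i b i' ∈ Set.Icc 0 1 := fun b hb i' => by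
      rcases eq_or_ne i' i with rfl | hne
      · simpa using hb
      · simpa [hne] using hp i'
    have hagree' : ∀ b, ∀ j ∉ D', 1 - termProb T (update p i b) j = w j := fun b j hj => by
      have hij : i ∉ T j := fun h => hj ((hT i j).1 h ▸ mem_insert_self _ _)
      rw [termProb_update_of_notMem p hij, hagree j fun h => hj (mem_insert_of_mem h)]
    have hcard : (fun x => ((D ∪ (DecTree.node i t₀ t₁).touched tm x).card : ℝ)) = fun x =>
        if x i then ((D' ∪ t₁.touched tm x).card : ℝ) else ((D' ∪ t₀.touched tm x).card : ℝ) := by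
      ext x
      simp only [DecTree.touched, D', union_insert, insert_union]
      split <;> rfl
    have h₁ : p i * potential T w (update p i 1) D' ≤
        p i * expect (update p i 1) fun x => ((D' ∪ t₁.touched tm x).card : ℝ) := by
      rcases eq_or_ne (p i) 0 with h | h
      · simp [h]
      refine mul_le_mul_of_nonneg_left (ih₁ _ _ (hp' 1 (by simp)) (hagree' 1) fun x hx => ?_)
        (hp i).1
      obtain ⟨hxi, hx⟩ := prodWeight_ne_zero_of_update_one h hx
      simpa [DecTree.eval, hxi] using ht x hx
    have h₀ : (1 - p i) * potential T w (update p i 0) D' ≤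
        (1 - p i) * expect (update p i 0) fun x => ((D' ∪ t₀.touched tm x).card : ℝ) := by
      rcases eq_or_ne (p i) 1 with h | h
      · simp [h]
      refine mul_le_mul_of_nonneg_left (ih₀ _ _ (hp' 0 (by simp)) (hagree' 0) fun x hx => ?_)
        (sub_nonneg.2 (hp i).2)
      obtain ⟨hxi, hx⟩ := prodWeight_ne_zero_of_update_zero h hx
      simpa [DecTree.eval, hxi] using ht x hx
    calc potential T w p D ≤ potential T w p D' :=
          potential_le_potential_insert (fun j => (hw j).1.le) hp hagree (tm i)
      _ = p i * potential T w (update p i 1) D' + (1 - p i) * potential T w (update p i 0) D' :=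
          potential_eq_cond (pairwise_disjoint_of_mem_iff hT) w p D' i
      _ ≤ _ := add_le_add h₁ h₀
      _ = _ := by
          rw [hcard, expect_eq_cond p i, expect_update_one_ite, expect_update_zero_ite]

theorem phi_le_OPTA {tm : Fin n → Fin m} (hT : ∀ i j, i ∈ T j ↔ tm i = j)
    (hTne : ∀ j, (T j).Nonempty) (hDNF : ∀ x, f x = true ↔ ∃ j, ∀ i ∈ T j, x i = true)
    (hp : ∀ i, p i ∈ Set.Ioo 0 1) :
    phi (fun j => 1 - termProb T p j) univ ≤ OPTA n f (fun _ => 1) p := by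
  obtain ⟨t₀, ht₀⟩ := DecTree.exists_computes f
  refine le_csInf ⟨_, t₀, ht₀, rfl⟩ ?_
  rintro _ ⟨t, ht, rfl⟩
  have hw : ∀ j, 1 - termProb T p j ∈ Set.Ioo 0 1 := fun j => by
    have := termProb_mem_Ioo hp (hTne j)
    constructor <;> linarith [this.1, this.2]
  have hp' : ∀ i, p i ∈ Set.Icc 0 1 := fun i => Set.Ioo_subset_Icc_self (hp i)
  have h := potential_le_expect_card_touched hT hDNF hw t p ∅ hp' (fun _ _ => rfl)
    fun x _ => ht x
  simp only [potential, card_empty, unsatProb, prod_empty, compl_empty, empty_union] at h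
  calc _ ≤ expect p fun x => ((t.touched tm x).card : ℝ) := by simpa using h
    _ ≤ adExpCost n (fun _ => 1) p t := expect_mono hp' (t.card_touched_le_costOn tm)

end LowerBound

section UpperBound

variable {f : (Fin n → Bool) → Bool} {π : Equiv.Perm (Fin n)} {x : Fin n → Bool}

lemma card_prefixSet_le (π : Equiv.Perm (Fin n)) (K : ℕ) : (prefixSet n π K).card ≤ K :=
  calc (prefixSet n π K).card ≤ (range K).card :=
        card_le_card_of_injOn (fun i => (π.symm i : ℕ))
          (fun i hi => by simpa [prefixSet] using hi) fun i _ i' _ h => π.symm.injective (Fin.ext h)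
    _ = K := card_range K

lemma naCost_le_of_determines {K : ℕ} (h : Determines n f (prefixSet n π K) x) :
    naCost n f (fun _ => 1) π x ≤ K := by
  rw [naCost, sum_const, nsmul_one, Nat.cast_le]
  exact (card_prefixSet_le π _).trans (Nat.sInf_le h)

lemma naCost_le_mul_sum {k a₀ : ℕ} {g : ℕ → ℝ} (hg : ∀ a, 0 ≤ g a)
    (hdet : Determines n f (prefixSet n π (k * a₀)) x)
    (hg₁ : ∀ a, ¬ Determines n f (prefixSet n π (k * a)) x → g a = 1) :
    naCost n f (fun _ => 1) π x ≤ k * ∑ a ∈ range a₀, g a := by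
  classical
  have hex : ∃ a, Determines n f (prefixSet n π (k * a)) x := ⟨a₀, hdet⟩
  calc naCost n f (fun _ => 1) π x ≤ (k * Nat.find hex : ℕ) :=
        naCost_le_of_determines (Nat.find_spec hex)
    _ = k * ∑ a ∈ range (Nat.find hex), g a := by
        rw [sum_congr rfl fun a ha => hg₁ a (Nat.find_min _ (mem_range.1 ha))]
        simp
    _ ≤ k * ∑ a ∈ range a₀, g a :=
        mul_le_mul_of_nonneg_left (sum_le_sum_of_subset_of_nonneg
          (range_subset_range.2 (Nat.find_min' hex hdet)) fun a _ _ => hg a) k.cast_nonneg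

lemma exists_perm_val_symm_lt {k : ℕ} (hn : n = m * k) (tm : Fin n → Fin m)
    (hk : ∀ j, Fintype.card {i // tm i = j} = k) (ρ : Equiv.Perm (Fin m)) :
    ∃ π : Equiv.Perm (Fin n), ∀ i, (π.symm i : ℕ) < k * ((ρ (tm i) : ℕ) + 1) := by
  -- the `r`-th variable of the term `j` is tested at position `r + k * ρ j`
  let e : Fin n ≃ Fin n :=
    (Equiv.sigmaFiberEquiv tm).symm.trans <|
      (Equiv.sigmaCongrRight fun j => Fintype.equivFinOfCardEq (hk j)).trans <|
      (Equiv.sigmaEquivProd _ _).trans <| (Equiv.prodCongr ρ (Equiv.refl _)).trans <|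
      finProdFinEquiv.trans (finCongr hn.symm)
  refine ⟨e.symm, fun i => ?_⟩
  simp only [e, Equiv.symm_symm, Equiv.trans_apply, finCongr_apply, Fin.val_cast,
    finProdFinEquiv_apply_val, Equiv.prodCongr_apply, Equiv.sigmaEquivProd_apply]
  rw [mul_add, mul_one, add_comm]
  exact Nat.add_lt_add_left (Fin.isLt _) _

lemma prod_filter_val_lt_card_le {M : ℕ} {g : Fin M → ℝ} (hg : Monotone g) (hg₀ : ∀ b, 0 ≤ g b)
    (S : Finset (Fin M)) :
    ∏ b ∈ univ.filter (fun b : Fin M => (b : ℕ) < S.card), g b ≤ ∏ b ∈ S, g b := by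
  induction S using Finset.induction_on_max with
  | empty => simp
  | insert c S hlt ih =>
    have hc : c ∉ S := fun h => lt_irrefl c (hlt c h)
    have hS : S.card ≤ c := by
      simpa using card_le_card (show S ⊆ Iio c from fun b hb => mem_Iio.2 (hlt b hb))
    have hsplit : univ.filter (fun b : Fin M => (b : ℕ) < (insert c S).card) =
        insert ⟨S.card, by omega⟩ (univ.filter fun b : Fin M => (b : ℕ) < S.card) := by
      ext b
      simp [card_insert_of_notMem hc, Fin.ext_iff]
      omega
    rw [hsplit, prod_insert (by simp), prod_insert hc]
    exact mul_le_mul (hg (Fin.mk_le_of_le_val hS)) ih (prod_nonneg fun b _ => hg₀ b) (hg₀ c)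

lemma prod_sortPrefix_le_minProd {M : ℕ} {w : Fin M → ℝ} (hw : ∀ j, 0 ≤ w j) {a : ℕ}
    (ha : a ≤ M) :
    ∏ j ∈ univ.filter (fun j => ((Tuple.sort w).symm j : ℕ) < a), w j ≤ minProd w univ a := by
  have hA : univ.filter (fun j => ((Tuple.sort w).symm j : ℕ) < a) =
      (univ.filter fun b : Fin M => (b : ℕ) < a).map (Tuple.sort w).toEmbedding := by
    ext j
    simp [mem_map_equiv]
  rw [hA, minProd, dif_pos (by simpa using ha), prod_map]
  refine le_inf' _ _ fun S hS => ?_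
  rw [mem_powersetCard] at hS
  have h := prod_filter_val_lt_card_le (Tuple.monotone_sort w) (fun b => hw _)
    (S.map (Tuple.sort w).symm.toEmbedding)
  rw [card_map, hS.2, prod_map] at h
  simpa using h

lemma determines_of_subset {T : Fin m → Finset (Fin n)}
    (hDNF : ∀ x, f x = true ↔ ∃ j, ∀ i ∈ T j, x i = true) {S : Finset (Fin n)} {j : Fin m}
    (hS : T j ⊆ S) (hx : ∀ i ∈ T j, x i = true) : Determines n f S x := fun x' hx' => by
  rw [(hDNF x').2 ⟨j, fun i hi => (hx' i (hS hi)).trans (hx i hi)⟩, (hDNF x).2 ⟨j, hx⟩]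

lemma naCost_le_sum_unsatIndicator {T : Fin m → Finset (Fin n)} {tm : Fin n → Fin m}
    (hT : ∀ i j, i ∈ T j ↔ tm i = j) (hDNF : ∀ x, f x = true ↔ ∃ j, ∀ i ∈ T j, x i = true)
    {k : ℕ} (hn : n = m * k) {ρ : Fin m → Fin m}
    (hπ : ∀ i, (π.symm i : ℕ) < k * ((ρ (tm i) : ℕ) + 1)) (x : Fin n → Bool) :
    naCost n f (fun _ => 1) π x ≤
      k * ∑ a ∈ range m, unsatIndicator T (univ.filter fun j => (ρ j : ℕ) < a) x := by
  have hsub : ∀ a j, (ρ j : ℕ) < a → T j ⊆ prefixSet n π (k * a) := fun a j hj i hi => by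
    simp only [prefixSet, mem_filter, mem_univ, true_and]
    calc (π.symm i : ℕ) < k * ((ρ j : ℕ) + 1) := (hT i j).1 hi ▸ hπ i
      _ ≤ k * a := Nat.mul_le_mul_left k hj
  have hall : Determines n f (prefixSet n π (k * m)) x := fun x' hx' => by
    congr
    ext i
    exact hx' i (by simp [prefixSet, mul_comm k, ← hn])
  refine naCost_le_mul_sum (fun a => unsatIndicator_nonneg _ x) hall fun a ha => ?_
  refine unsatIndicator_eq_one fun j hj hx => ha (determines_of_subset hDNF (hsub a j ?_) hx)
  simpa using hj

theorem exists_perm_naExpCost_le {T : Fin m → Finset (Fin n)} {tm : Fin n → Fin m}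
    (hT : ∀ i j, i ∈ T j ↔ tm i = j) (hDNF : ∀ x, f x = true ↔ ∃ j, ∀ i ∈ T j, x i = true)
    {k : ℕ} (hk : ∀ j, (T j).card = k) (hn : n = m * k) {p : Fin n → ℝ}
    (hp : ∀ i, p i ∈ Set.Icc 0 1) :
    ∃ π : Equiv.Perm (Fin n),
      naExpCost n f (fun _ => 1) p π ≤ k * phi (fun j => 1 - termProb T p j) univ := by
  set w := fun j => 1 - termProb T p j
  set ρ := (Tuple.sort w).symm
  have hfiber : ∀ j, Fintype.card {i // tm i = j} = k := fun j => by
    rw [Fintype.card_subtype, ← hk j]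
    congr 1
    ext i
    simp [hT]
  obtain ⟨π, hπ⟩ := exists_perm_val_symm_lt hn tm hfiber ρ
  refine ⟨π, ?_⟩
  calc naExpCost n f (fun _ => 1) p π
      ≤ expect p fun x =>
          ∑ a ∈ range m, k * unsatIndicator T (univ.filter fun j => (ρ j : ℕ) < a) x :=
        expect_mono hp fun x => (naCost_le_sum_unsatIndicator hT hDNF hn hπ x).trans_eq (mul_sum ..)
    _ = ∑ a ∈ range m, k * unsatProb T p (univ.filter fun j => (ρ j : ℕ) < a) := by
        rw [expect_sum_mul]
        simp only [expect_unsatIndicator (pairwise_disjoint_of_mem_iff hT)]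
    _ ≤ ∑ a ∈ range m, k * minProd w univ a := by
        gcongr with a ha
        exact prod_sortPrefix_le_minProd (fun j => by simp [w, (termProb_mem_Icc hp j).2])
          (mem_range.1 ha).le
    _ = k * phi w univ := by rw [phi, card_univ, Fintype.card_fin, mul_sum]

end UpperBound

end SBFE

theorem stmt2_general (n m : ℕ) (hdvd : m ∣ n)
    (T : Fin m → Finset (Fin n)) (f : (Fin n → Bool) → Bool)
    (hcard : ∀ j, (T j).card = n / m)
    (hcover : ∀ i : Fin n, ∃ j, i ∈ T j)
    (hf : IsReadOnceDNF n m T f)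
    (p : Fin n → ℝ) (hp : ∀ i, 0 < p i ∧ p i < 1) :
    ∃ π : Equiv.Perm (Fin n),
      naExpCost n f (fun _ => 1) p π ≤ ((n : ℝ) / m) * OPTA n f (fun _ => 1) p := by
  obtain ⟨hTne, hdisj, hDNF⟩ := hf
  choose tm htm using hcover
  have hT : ∀ i j, i ∈ T j ↔ tm i = j := fun i j =>
    ⟨fun hi => by_contra fun h => disjoint_left.1 (hdisj _ _ h) (htm i) hi, fun h => h ▸ htm i⟩
  obtain ⟨π, hπ⟩ := SBFE.exists_perm_naExpCost_le hT hDNF hcard (Nat.mul_div_cancel' hdvd).symm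
    fun i => Set.Ioo_subset_Icc_self (hp i)
  refine ⟨π, hπ.trans ?_⟩
  rw [← Nat.cast_div_charZero hdvd]
  exact mul_le_mul_of_nonneg_left (SBFE.phi_le_OPTA hT hTne hDNF hp) (Nat.cast_nonneg _)

/-- For a monotone read-once DNF `f` with `m` terms, each containing exactly `n/m`
variables (so every variable appears in exactly one term), under unit costs and
arbitrary probabilities there is a non-adaptive strategy of expected cost at most
`(n/m)·OPT_A(f)`. -/
theorem stmt2 (n m : ℕ) (hm : 0 < m) (hdvd : m ∣ n)
    (T : Fin m → Finset (Fin n)) (f : (Fin n → Bool) → Bool)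
    (hcard : ∀ j, (T j).card = n / m)
    (hcover : ∀ i : Fin n, ∃ j, i ∈ T j)
    (hf : IsReadOnceDNF n m T f)
    (p : Fin n → ℝ) (hp : ∀ i, 0 < p i ∧ p i < 1) :
    ∃ π : Equiv.Perm (Fin n),
      naExpCost n f (fun _ => 1) p π ≤ ((n : ℝ) / m) * OPTA n f (fun _ => 1) p :=
  stmt2_general n m hdvd T f hcard hcover hf p hp
end

section
/- There is a constant c > 0 such that for every integer k ≥ 3, letting n = 4k², there exist a monotone read-once DNF f on n variables (consisting of 4k pairwise-disjoint terms of k variables each) and a probability vector p ∈ (0,1)^n such that under unit costs OPT_N(f, unit costs, p) ≥ c · √n · OPT_A(f, unit costs, p). -/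
open Finset

/-!
Take `4k` disjoint terms of `k` variables each. The first variable of a term is `1` with
probability `1/(4k)`, the others with probability `1 - 1/(2k)`, so a term is satisfied with
probability `ρ ∈ [1/(8k), 1/(4k)]`.

Adaptively, test the first variable of each term and read the rest of the term only when it is
`1`: the expected cost is at most `4k (1 + k/(4k)) = 5k`.

A fixed order `π` has read at most `2k` whole terms after its first `2k²` tests. With
probability `(1-ρ)^(2k) - (1-ρ)^(4k) ≥ 1/10` all of those terms fail while some other term is
satisfied; then `f x = 1` has no certificate among the first `2k²` tests, so `π` pays more than
`2k²`. Hence `OPT_N ≥ k²/5 = (1/50) · √n · 5k ≥ (1/50) · √n · OPT_A`.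
-/

section Probability

variable {n : ℕ} {p : Fin n → ℝ}

lemma prodWeight_nonneg (hp : ∀ i, 0 ≤ p i ∧ p i ≤ 1) (x : Fin n → Bool) :
    0 ≤ prodWeight n p x :=
  Finset.prod_nonneg fun i _ => by
    cases x i
    · simp [(hp i).2]
    · simp [(hp i).1]

lemma sum_prodWeight_mul_ite_forall (A : Finset (Fin n)) :
    ∑ x, prodWeight n p x * (if ∀ i ∈ A, x i = true then 1 else 0) = ∏ i ∈ A, p i := by
  set h : Fin n → Bool → ℝ := fun i b =>
    (if b then p i else 1 - p i) * (if i ∈ A then (if b then 1 else 0) else 1)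
  have hfactor : ∀ x : Fin n → Bool,
      prodWeight n p x * (if ∀ i ∈ A, x i = true then 1 else 0) = ∏ i, h i (x i) := by
    intro x
    simp only [h, prodWeight, Finset.prod_mul_distrib, Finset.prod_ite_mem_eq, Finset.prod_boole]
    congr
  rw [Finset.sum_congr rfl fun x _ => hfactor x, ← Fintype.prod_sum h,
    ← Finset.prod_ite_mem_eq A p]
  refine Finset.prod_congr rfl fun i _ => ?_
  by_cases hi : i ∈ A <;> simp [h, hi]

lemma sum_prodWeight : ∑ x, prodWeight n p x = 1 := by
  simpa using sum_prodWeight_mul_ite_forall (p := p) ∅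

lemma sum_prodWeight_mul_ite (i : Fin n) :
    ∑ x, prodWeight n p x * (if x i then 1 else 0) = p i := by
  simpa using sum_prodWeight_mul_ite_forall (p := p) {i}

/-- By inclusion–exclusion this reduces to `sum_prodWeight_mul_ite_forall` on unions of terms,
whose products split by disjointness. -/
lemma sum_prodWeight_mul_ite_forall_not {m : ℕ} (T : Fin m → Finset (Fin n)) (S : Finset (Fin m))
    (hT : (S : Set (Fin m)).PairwiseDisjoint T) :
    ∑ x, prodWeight n p x * (if ∀ j ∈ S, ¬ ∀ i ∈ T j, x i = true then 1 else 0)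
      = ∏ j ∈ S, (1 - ∏ i ∈ T j, p i) := by
  have hexpand : ∀ x : Fin n → Bool, (if ∀ j ∈ S, ¬ ∀ i ∈ T j, x i = true then (1 : ℝ) else 0)
      = ∑ t ∈ S.powerset, (-1) ^ t.card *
          (if ∀ i ∈ t.biUnion T, x i = true then 1 else 0) := by
    intro x
    have hprod : (if ∀ j ∈ S, ¬ ∀ i ∈ T j, x i = true then (1 : ℝ) else 0)
        = ∏ j ∈ S, (if ¬ ∀ i ∈ T j, x i = true then (1 : ℝ) else 0) := by
      rw [Finset.prod_boole]; congr
    have hfactor : ∀ j ∈ S, (if ¬ ∀ i ∈ T j, x i = true then (1 : ℝ) else 0)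
        = -(if ∀ i ∈ T j, x i = true then 1 else 0) + 1 := fun j _ => by split_ifs <;> simp
    rw [hprod, Finset.prod_congr rfl hfactor, Finset.prod_add]
    refine Finset.sum_congr rfl fun t _ => ?_
    rw [Finset.prod_const_one, mul_one, Finset.prod_neg, Finset.prod_boole]
    simp only [Finset.mem_biUnion, forall_exists_index, and_imp]
    congr 2
    exact propext ⟨fun h i j hj hi => h j hj i hi, fun h j hj i hi => h i j hj hi⟩
  simp_rw [hexpand, Finset.mul_sum, sub_eq_neg_add]
  rw [Finset.sum_comm, Finset.prod_add]
  refine Finset.sum_congr rfl fun t ht => ?_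
  rw [Finset.prod_const_one, mul_one, Finset.prod_neg, ← Finset.prod_biUnion
    (hT.subset (Finset.mem_powerset.1 ht)), ← sum_prodWeight_mul_ite_forall, Finset.mul_sum]
  exact Finset.sum_congr rfl fun x _ => by ring

end Probability

section NonAdaptive

variable {n : ℕ} {f : (Fin n → Bool) → Bool} {π : Equiv.Perm (Fin n)} {x : Fin n → Bool}

lemma Determines.mono {S S' : Finset (Fin n)} (h : Determines n f S x) (hSS' : S ⊆ S') :
    Determines n f S' x :=
  fun x' hx' => h x' fun i hi => hx' i (hSS' hi)

lemma prefixSet_mono {L L' : ℕ} (h : L ≤ L') : prefixSet n π L ⊆ prefixSet n π L' :=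
  Finset.monotone_filter_right _ fun _ _ hi => lt_of_lt_of_le hi h

lemma card_prefixSet (L : ℕ) : #(prefixSet n π L) = min n L := by
  rw [← Fin.card_filter_val_lt, prefixSet, ← Finset.card_map π.symm.toEmbedding]
  congr 1
  ext i
  simp

lemma determines_prefixSet_naSteps : Determines n f (prefixSet n π (naSteps n f π x)) x := by
  refine Nat.sInf_mem (s := {L | Determines n f (prefixSet n π L) x}) ⟨n, fun x' hx' => ?_⟩
  rw [show x' = x from funext fun i => hx' i (by simp [prefixSet])]

lemma lt_naSteps_of_not_determines {L : ℕ} (h : ¬ Determines n f (prefixSet n π L) x) :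
    L < naSteps n f π x := by
  by_contra! hle
  exact h (Determines.mono determines_prefixSet_naSteps (prefixSet_mono hle))

lemma naCost_one : naCost n f (fun _ => 1) π x = #(prefixSet n π (naSteps n f π x)) := by
  simp [naCost]

lemma le_naCost_of_not_determines {L : ℕ} (hL : L ≤ n)
    (h : ¬ Determines n f (prefixSet n π L) x) : (L : ℝ) ≤ naCost n f (fun _ => 1) π x := by
  rw [naCost_one, card_prefixSet]
  exact_mod_cast le_min hL (lt_naSteps_of_not_determines h).le

end NonAdaptive

section ReadOnceDNF

variable {n m : ℕ} {T : Fin m → Finset (Fin n)} {f : (Fin n → Bool) → Bool}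

/-- A certificate of `f x = true` must contain a whole term that `x` satisfies: otherwise
switching off every untested variable falsifies every term. -/
lemma IsReadOnceDNF.exists_subset_of_determines (hf : IsReadOnceDNF n m T f)
    {x : Fin n → Bool} {S : Finset (Fin n)} (hfx : f x = true) (hS : Determines n f S x) :
    ∃ j, T j ⊆ S ∧ ∀ i ∈ T j, x i = true := by
  set x' : Fin n → Bool := fun i => decide (i ∈ S) && x i
  obtain ⟨j, hj⟩ := (hf.2.2 x').1 ((hS x' fun i hi => by simp [x', hi]).trans hfx)
  have hjS : ∀ i ∈ T j, i ∈ S ∧ x i = true := fun i hi => by simpa [x'] using hj i hi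
  exact ⟨j, fun i hi => (hjS i hi).1, fun i hi => (hjS i hi).2⟩

lemma card_filter_subset_mul_le {k : ℕ} (hf : IsReadOnceDNF n m T f) (hT : ∀ j, #(T j) = k)
    (S : Finset (Fin n)) : #{j | T j ⊆ S} * k ≤ #S := by
  have hdisj : ((({j | T j ⊆ S} : Finset (Fin m))) : Set (Fin m)).PairwiseDisjoint T :=
    fun j _ j' _ hjj' => hf.2.1 j j' hjj'
  calc #{j | T j ⊆ S} * k = #(({j | T j ⊆ S} : Finset (Fin m)).biUnion T) := by
        rw [Finset.card_biUnion hdisj, Finset.sum_congr rfl fun j _ => hT j, Finset.sum_const,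
          smul_eq_mul]
    _ ≤ #S := Finset.card_le_card (Finset.biUnion_subset.2 fun j hj => (Finset.mem_filter.1 hj).2)

/-- On inputs where every term inside the first `L` tests fails but some term is satisfied,
the first `L` tests do not determine `f`, so `π` pays at least `L`. -/
lemma mul_sub_pow_le_naExpCost (hf : IsReadOnceDNF n m T f) {p : Fin n → ℝ}
    (hp : ∀ i, 0 ≤ p i ∧ p i ≤ 1) {ρ : ℝ} (hρ : ∀ j, ∏ i ∈ T j, p i = ρ)
    (π : Equiv.Perm (Fin n)) {L : ℕ} (hL : L ≤ n) :
    L * ((1 - ρ) ^ #{j | T j ⊆ prefixSet n π L} - (1 - ρ) ^ m)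
      ≤ naExpCost n f (fun _ => 1) p π := by
  set G : Finset (Fin m) := {j | T j ⊆ prefixSet n π L}
  set fails : Finset (Fin m) → (Fin n → Bool) → ℝ := fun S x =>
    if ∀ j ∈ S, ¬ ∀ i ∈ T j, x i = true then 1 else 0
  have hprob : ∀ S, ∑ x, prodWeight n p x * fails S x = (1 - ρ) ^ #S := fun S => by
    rw [sum_prodWeight_mul_ite_forall_not T S fun j _ j' _ h => hf.2.1 j j' h,
      Finset.prod_congr rfl fun j _ => by rw [hρ j], Finset.prod_const]
  have hcost : ∀ x, L * (fails G x - fails Finset.univ x) ≤ naCost n f (fun _ => 1) π x := by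
    intro x
    have hnonneg : 0 ≤ naCost n f (fun _ => 1) π x := by rw [naCost_one]; positivity
    by_cases hG : ∀ j ∈ G, ¬ ∀ i ∈ T j, x i = true
    · by_cases hU : ∀ j ∈ Finset.univ, ¬ ∀ i ∈ T j, x i = true
      · simpa only [fails, if_pos hG, if_pos hU, sub_self, mul_zero] using hnonneg
      · have hfx : f x = true := (hf.2.2 x).2 (by simpa using hU)
        have hundet : ¬ Determines n f (prefixSet n π L) x := fun hdet => by
          obtain ⟨j, hjS, hjx⟩ := IsReadOnceDNF.exists_subset_of_determines hf hfx hdet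
          exact hG j (by simpa [G] using hjS) hjx
        simpa only [fails, if_pos hG, if_neg hU, sub_zero, mul_one]
          using le_naCost_of_not_determines hL hundet
    · have hU : ¬ ∀ j ∈ Finset.univ, ¬ ∀ i ∈ T j, x i = true := fun h => hG fun j _ => h j (by simp)
      simpa only [fails, if_neg hG, if_neg hU, sub_zero, mul_zero] using hnonneg
  calc L * ((1 - ρ) ^ #G - (1 - ρ) ^ m)
      = ∑ x, prodWeight n p x * (L * (fails G x - fails Finset.univ x)) := by
        simp_rw [mul_left_comm _ (L : ℝ), ← Finset.mul_sum, mul_sub, Finset.sum_sub_distrib,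
          hprob, Finset.card_univ, Fintype.card_fin]
        ring
    _ ≤ naExpCost n f (fun _ => 1) p π :=
        Finset.sum_le_sum fun x _ => mul_le_mul_of_nonneg_left (hcost x) (prodWeight_nonneg hp x)

end ReadOnceDNF

namespace DecTree

variable {n : ℕ}

def allOnesThen : List (Fin n) → DecTree n → DecTree n
  | [], _ => leaf true
  | i :: l, t => node i t (allOnesThen l t)

def ofTerms {ι : Type*} (L : ι → List (Fin n)) : List ι → DecTree n
  | [] => leaf false
  | j :: js => allOnesThen (L j) (ofTerms L js)

lemma eval_allOnesThen (l : List (Fin n)) (t : DecTree n) (x : Fin n → Bool) :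
    (allOnesThen l t).eval x = (decide (∀ i ∈ l, x i = true) || t.eval x) := by
  induction l with
  | nil => simp [allOnesThen, eval]
  | cons i l ih => cases hx : x i <;> simp [allOnesThen, eval, hx, ih]

lemma eval_ofTerms {ι : Type*} (L : ι → List (Fin n)) (js : List ι) (x : Fin n → Bool) :
    (ofTerms L js).eval x = decide (∃ j ∈ js, ∀ i ∈ L j, x i = true) := by
  induction js with
  | nil => simp [ofTerms, eval]
  | cons j js ih => simp [ofTerms, eval_allOnesThen, ih]

variable {c : Fin n → ℝ}

lemma costOn_nonneg (hc : ∀ i, 0 ≤ c i) (t : DecTree n) (x : Fin n → Bool) :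
    0 ≤ t.costOn c x := by
  induction t with
  | leaf => simp [costOn]
  | node i t₀ t₁ ih₀ ih₁ =>
    rw [costOn]
    split_ifs
    · exact add_nonneg (hc i) ih₁
    · exact add_nonneg (hc i) ih₀

lemma costOn_allOnesThen_le (hc : ∀ i, 0 ≤ c i) (l : List (Fin n)) (t : DecTree n)
    (x : Fin n → Bool) : (allOnesThen l t).costOn c x ≤ (l.map c).sum + t.costOn c x := by
  induction l with
  | nil => simpa [allOnesThen, costOn] using costOn_nonneg hc t x
  | cons i l ih =>
    have hl : 0 ≤ (l.map c).sum := List.sum_nonneg (by simpa using fun j _ => hc j)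
    simp only [allOnesThen, costOn, List.map_cons, List.sum_cons]
    split_ifs <;> linarith

lemma costOn_ofTerms_le (hc : ∀ i, 0 ≤ c i) {ι : Type*} (h : ι → Fin n) (r : ι → List (Fin n))
    (js : List ι) (x : Fin n → Bool) :
    (ofTerms (fun j => h j :: r j) js).costOn c x
      ≤ (js.map fun j => c (h j) + if x (h j) then ((r j).map c).sum else 0).sum := by
  induction js with
  | nil => simp [ofTerms, costOn]
  | cons j js ih =>
    simp only [ofTerms, allOnesThen, costOn, List.map_cons, List.sum_cons]
    split_ifs
    · linarith [costOn_allOnesThen_le hc (r j) (ofTerms (fun j => h j :: r j) js) x]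
    · linarith

end DecTree

section Optimum

variable {n : ℕ} {f : (Fin n → Bool) → Bool} {c p : Fin n → ℝ}

lemma le_OPTN {a : ℝ} (h : ∀ π, a ≤ naExpCost n f c p π) : a ≤ OPTN n f c p :=
  le_csInf ⟨_, 1, rfl⟩ fun _ ⟨π, hπ⟩ => hπ ▸ h π

lemma OPTA_le (hp : ∀ i, 0 ≤ p i ∧ p i ≤ 1) (hc : ∀ i, 0 ≤ c i) {t : DecTree n}
    (ht : t.Computes f) : OPTA n f c p ≤ adExpCost n c p t := by
  refine csInf_le ⟨0, ?_⟩ ⟨t, ht, rfl⟩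
  rintro _ ⟨t', -, rfl⟩
  exact Finset.sum_nonneg fun x _ =>
    mul_nonneg (prodWeight_nonneg hp x) (DecTree.costOn_nonneg hc t' x)

lemma adExpCost_ofTerms_le (hp : ∀ i, 0 ≤ p i ∧ p i ≤ 1) {m : ℕ} (h : Fin m → Fin n)
    (r : Fin m → List (Fin n)) :
    adExpCost n (fun _ => 1) p (DecTree.ofTerms (fun j => h j :: r j) (List.finRange m))
      ≤ ∑ j, (1 + (r j).length * p (h j)) := by
  calc adExpCost n (fun _ => 1) p (DecTree.ofTerms (fun j => h j :: r j) (List.finRange m))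
      ≤ ∑ x, prodWeight n p x * ∑ j, (1 + ((r j).length : ℝ) * (if x (h j) then 1 else 0)) := by
        refine Finset.sum_le_sum fun x _ => mul_le_mul_of_nonneg_left ?_ (prodWeight_nonneg hp x)
        refine (DecTree.costOn_ofTerms_le (fun _ => zero_le_one) h r _ x).trans_eq ?_
        rw [Fin.sum_univ_def]
        congr 1
        refine List.map_congr_left fun j _ => ?_
        split_ifs <;> simp
    _ = ∑ j, (1 + (r j).length * p (h j)) := by
        simp_rw [Finset.mul_sum, mul_add, mul_left_comm _ ((r _).length : ℝ), mul_one]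
        rw [Finset.sum_comm]
        simp_rw [Finset.sum_add_distrib, ← Finset.mul_sum, sum_prodWeight,
          sum_prodWeight_mul_ite]

end Optimum

lemma one_tenth_le_pow_sub_pow {ρ : ℝ} (hρ : ρ ≤ 1) {g N : ℕ} (hgN : g ≤ N)
    (hg : g * ρ ≤ 1 / 2) (hN : 1 / 4 ≤ (N - g : ℕ) * ρ) :
    1 / 10 ≤ (1 - ρ) ^ g - (1 - ρ) ^ N := by
  have hhead : 1 / 2 ≤ (1 - ρ) ^ g := by
    have := one_add_mul_le_pow (show (-2 : ℝ) ≤ -ρ by linarith) g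
    rw [← sub_eq_add_neg] at this
    linarith
  have htail : (1 - ρ) ^ (N - g) ≤ 4 / 5 := by
    have hexp : Real.exp (-(1 / 4)) ≤ 4 / 5 := by
      rw [Real.exp_neg, inv_le_comm₀ (Real.exp_pos _) (by norm_num)]
      linarith [Real.add_one_le_exp (1 / 4)]
    calc (1 - ρ) ^ (N - g) ≤ Real.exp (-ρ) ^ (N - g) :=
          pow_le_pow_left₀ (by linarith) (Real.one_sub_le_exp_neg ρ) _
      _ = Real.exp (-((N - g : ℕ) * ρ)) := by rw [← Real.exp_nat_mul]; ring_nf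
      _ ≤ Real.exp (-(1 / 4)) := Real.exp_le_exp.2 (by linarith)
      _ ≤ 4 / 5 := hexp
  have hsplit : (1 - ρ) ^ N = (1 - ρ) ^ g * (1 - ρ) ^ (N - g) := by
    rw [← pow_add, Nat.add_sub_cancel' hgN]
  rw [hsplit]
  nlinarith

section HardInstance

variable (k : ℕ)

def hardVar (j : Fin (4 * k)) : Fin k ↪ Fin (4 * k * k) :=
  (Function.Embedding.sectR j (Fin k)).trans finProdFinEquiv.toEmbedding

def hardTerm (j : Fin (4 * k)) : Finset (Fin (4 * k * k)) :=
  Finset.univ.map (hardVar k j)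

def hardDNF (x : Fin (4 * k * k) → Bool) : Bool :=
  decide (∃ j, ∀ i ∈ hardTerm k j, x i = true)

noncomputable def hardProb (i : Fin (4 * k * k)) : ℝ :=
  if (finProdFinEquiv.symm i).2.val = 0 then 1 / (4 * (k : ℝ)) else 1 - 1 / (2 * (k : ℝ))

noncomputable def hardTermProb : ℝ :=
  1 / (4 * (k : ℝ)) * (1 - 1 / (2 * (k : ℝ))) ^ (k - 1)

variable {k}

lemma mem_hardTerm {j : Fin (4 * k)} {i : Fin (4 * k * k)} :
    i ∈ hardTerm k j ↔ ∃ b, hardVar k j b = i := by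
  simp [hardTerm]

lemma hardProb_hardVar (j : Fin (4 * k)) (b : Fin k) :
    hardProb k (hardVar k j b) = if b.val = 0 then 1 / (4 * (k : ℝ)) else 1 - 1 / (2 * (k : ℝ)) := by
  simp [hardProb, hardVar]

lemma card_hardTerm (j : Fin (4 * k)) : #(hardTerm k j) = k := by
  simp [hardTerm]

variable [NeZero k]

lemma isReadOnceDNF_hardDNF : IsReadOnceDNF (4 * k * k) (4 * k) (hardTerm k) (hardDNF k) := by
  refine ⟨fun j => Finset.card_pos.1 (by simp [card_hardTerm, NeZero.pos]), fun j j' hjj' => ?_,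
    fun x => by simp [hardDNF]⟩
  refine Finset.disjoint_left.2 fun i hi hi' => hjj' ?_
  obtain ⟨b, rfl⟩ := mem_hardTerm.1 hi
  obtain ⟨b', hb'⟩ := mem_hardTerm.1 hi'
  simpa [hardVar] using (congrArg Prod.fst (finProdFinEquiv.injective hb')).symm

lemma hardProb_mem (i : Fin (4 * k * k)) : 0 < hardProb k i ∧ hardProb k i < 1 := by
  have hk : (1 : ℝ) ≤ k := by exact_mod_cast NeZero.one_le
  unfold hardProb
  split_ifs
  · constructor
    · positivity
    · rw [div_lt_one (by positivity)]; linarith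
  · have : 1 / (2 * (k : ℝ)) ≤ 1 / 2 := by gcongr; linarith
    constructor <;> linarith [show 0 < 1 / (2 * (k : ℝ)) by positivity]

lemma prod_hardProb (j : Fin (4 * k)) : ∏ i ∈ hardTerm k j, hardProb k i = hardTermProb k := by
  rw [hardTerm, Finset.prod_map]
  simp_rw [hardProb_hardVar, Fin.val_eq_zero_iff]
  rw [Finset.prod_ite, Finset.filter_eq', Finset.filter_ne', Finset.prod_const, Finset.prod_const,
    Finset.card_erase_of_mem (Finset.mem_univ _)]
  simp [hardTermProb]

lemma hardTermProb_mem_Icc :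
    1 / (8 * k) ≤ hardTermProb k ∧ hardTermProb k ≤ 1 / (4 * k) := by
  have hk : (1 : ℝ) ≤ k := by exact_mod_cast NeZero.one_le
  have hq₀ : 0 ≤ 1 - 1 / (2 * (k : ℝ)) := by
    have : 1 / (2 * (k : ℝ)) ≤ 1 / 2 := by gcongr; linarith
    linarith
  have hq₁ : 1 - 1 / (2 * (k : ℝ)) ≤ 1 := by linarith [show 0 < 1 / (2 * (k : ℝ)) by positivity]
  have hpow : 1 / 2 ≤ (1 - 1 / (2 * (k : ℝ))) ^ (k - 1) := by
    have h := one_add_mul_le_pow (show (-2 : ℝ) ≤ -(1 / (2 * k)) by linarith) (k - 1)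
    rw [← sub_eq_add_neg, Nat.cast_sub NeZero.one_le, Nat.cast_one] at h
    have : ((k : ℝ) - 1) * (1 / (2 * k)) ≤ 1 / 2 := by
      rw [mul_one_div, div_le_iff₀ (by positivity)]; linarith
    linarith
  constructor
  · calc 1 / (8 * (k : ℝ)) = 1 / (4 * k) * (1 / 2) := by ring
      _ ≤ hardTermProb k := by unfold hardTermProb; gcongr
  · calc hardTermProb k ≤ 1 / (4 * k) * 1 := by
          unfold hardTermProb; gcongr; exact pow_le_one₀ hq₀ hq₁
      _ = 1 / (4 * k) := mul_one _

variable (k) in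
def hardTail (j : Fin (4 * k)) : List (Fin (4 * k * k)) :=
  ((List.finRange k).filter (· ≠ 0)).map (hardVar k j)

lemma mem_cons_hardTail {j : Fin (4 * k)} {i : Fin (4 * k * k)} :
    i ∈ hardVar k j 0 :: hardTail k j ↔ i ∈ hardTerm k j := by
  rw [mem_hardTerm, List.mem_cons, hardTail, List.mem_map]
  constructor
  · rintro (rfl | ⟨b, -, rfl⟩) <;> exact ⟨_, rfl⟩
  · rintro ⟨b, rfl⟩
    by_cases hb : b = 0
    · exact .inl (hb ▸ rfl)
    · exact .inr ⟨b, by simpa using hb, rfl⟩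

lemma OPTA_hardDNF_le :
    OPTA (4 * k * k) (hardDNF k) (fun _ => 1) (hardProb k) ≤ 5 * k := by
  have hk : (0 : ℝ) < k := by exact_mod_cast NeZero.pos k
  have hcomputes : (DecTree.ofTerms (fun j => hardVar k j 0 :: hardTail k j)
      (List.finRange (4 * k))).Computes (hardDNF k) := fun x => by
    simp only [DecTree.eval_ofTerms, hardDNF, List.mem_finRange, true_and, mem_cons_hardTail]
  have hlen : ∀ j, (hardTail k j).length ≤ k := fun j =>
    (List.length_map _).trans_le ((List.length_filter_le _ _).trans_eq List.length_finRange)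
  have hp : ∀ i, 0 ≤ hardProb k i ∧ hardProb k i ≤ 1 :=
    fun i => ⟨(hardProb_mem i).1.le, (hardProb_mem i).2.le⟩
  calc OPTA (4 * k * k) (hardDNF k) (fun _ => 1) (hardProb k)
      ≤ ∑ j, (1 + (hardTail k j).length * hardProb k (hardVar k j 0)) :=
        (OPTA_le hp (fun _ => zero_le_one) hcomputes).trans (adExpCost_ofTerms_le hp _ _)
    _ ≤ ∑ _j : Fin (4 * k), (1 + k * (1 / (4 * k)) : ℝ) := by
        refine Finset.sum_le_sum fun j _ => ?_
        rw [hardProb_hardVar, if_pos (Fin.val_zero k)]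
        gcongr
        exact hlen j
    _ = 5 * k := by simp; field_simp; ring

lemma le_OPTN_hardDNF :
    (k : ℝ) ^ 2 / 5 ≤ OPTN (4 * k * k) (hardDNF k) (fun _ => 1) (hardProb k) := by
  refine le_OPTN fun π => ?_
  have hk : (1 : ℝ) ≤ k := by exact_mod_cast NeZero.one_le
  obtain ⟨hρ₈, hρ₄⟩ := hardTermProb_mem_Icc (k := k)
  have hρ₀ : 0 ≤ hardTermProb k := (by positivity : (0 : ℝ) ≤ 1 / (8 * k)).trans hρ₈
  set g := #{j | hardTerm k j ⊆ prefixSet (4 * k * k) π (2 * k * k)}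
  have hg : g ≤ 2 * k := by
    have h := card_filter_subset_mul_le isReadOnceDNF_hardDNF card_hardTerm
      (prefixSet (4 * k * k) π (2 * k * k))
    rw [card_prefixSet, min_eq_right (by gcongr; norm_num)] at h
    exact Nat.le_of_mul_le_mul_right h (NeZero.pos k)
  have hgR : (g : ℝ) ≤ 2 * k := by exact_mod_cast hg
  have hrestR : (2 * k : ℝ) ≤ (4 * k - g : ℕ) := by
    rw [Nat.cast_sub (by omega)]; push_cast; linarith
  have htenth := one_tenth_le_pow_sub_pow (ρ := hardTermProb k)
    (hρ₄.trans (by rw [div_le_one (by positivity)]; linarith))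
    (show g ≤ 4 * k by omega)
    (by calc (g : ℝ) * hardTermProb k ≤ 2 * k * (1 / (4 * k)) := by gcongr
          _ = 1 / 2 := by field_simp; ring)
    (by calc (1 / 4 : ℝ) = 2 * k * (1 / (8 * k)) := by field_simp; ring
          _ ≤ _ := by gcongr)
  calc (k : ℝ) ^ 2 / 5 ≤ ((2 * k * k : ℕ) : ℝ) * (1 / 10) := by push_cast; nlinarith
    _ ≤ ((2 * k * k : ℕ) : ℝ) * ((1 - hardTermProb k) ^ g - (1 - hardTermProb k) ^ (4 * k)) := by
        gcongr
    _ ≤ naExpCost (4 * k * k) (hardDNF k) (fun _ => 1) (hardProb k) π :=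
        mul_sub_pow_le_naExpCost isReadOnceDNF_hardDNF (fun i => ⟨(hardProb_mem i).1.le,
          (hardProb_mem i).2.le⟩) prod_hardProb π (by gcongr; norm_num)

end HardInstance

/-- There is a constant `c > 0` such that for every `k ≥ 3`, with `n = 4k²`, there are a
monotone read-once DNF `f` on `n` variables consisting of `4k` pairwise-disjoint terms of
`k` variables each, and a probability vector `p ∈ (0,1)ⁿ`, such that under unit costs
`OPT_N(f,p) ≥ c·√n·OPT_A(f,p)`. -/
theorem stmt5 :
    ∃ c : ℝ, 0 < c ∧
      ∀ k : ℕ, 3 ≤ k →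
        ∃ (f : (Fin (4 * k * k) → Bool) → Bool)
          (T : Fin (4 * k) → Finset (Fin (4 * k * k)))
          (p : Fin (4 * k * k) → ℝ),
          (∀ j, (T j).card = k) ∧
          IsReadOnceDNF (4 * k * k) (4 * k) T f ∧
          (∀ i, 0 < p i ∧ p i < 1) ∧
          c * Real.sqrt (4 * k * k) * OPTA (4 * k * k) f (fun _ => 1) p ≤
            OPTN (4 * k * k) f (fun _ => 1) p := by
  refine ⟨1 / 50, by norm_num, fun k hk => ?_⟩
  have : NeZero k := ⟨by omega⟩
  refine ⟨hardDNF k, hardTerm k, hardProb k, card_hardTerm, isReadOnceDNF_hardDNF,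
    hardProb_mem, ?_⟩
  have hsqrt : Real.sqrt (4 * k * k) = 2 * k := by
    rw [show (4 : ℝ) * k * k = (2 * k) * (2 * k) by ring, Real.sqrt_mul_self (by positivity)]
  calc 1 / 50 * Real.sqrt (4 * k * k) * OPTA (4 * k * k) (hardDNF k) (fun _ => 1) (hardProb k)
      ≤ 1 / 50 * (2 * k) * (5 * k) := by rw [hsqrt]; gcongr; exact OPTA_hardDNF_le
    _ = (k : ℝ) ^ 2 / 5 := by ring
    _ ≤ OPTN (4 * k * k) (hardDNF k) (fun _ => 1) (hardProb k) := le_OPTN_hardDNF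
end

section
/- Let L be a positive integer, let p_1 ≥ p_2 ≥ … ≥ p_L ≥ 0 be real numbers, let p > 0 be a real number with p ≥ p_1, and set L' = ⌊(∑_{ℓ=1}^{L} p_ℓ)/p⌋. Then ∑_{ℓ=1}^{L} ℓ · p_ℓ ≥ ∑_{ℓ=1}^{L'} ℓ · p (the right-hand side equals p · L'(L'+1)/2). -/
/-!
Write `F k = ∑_{l ≤ k} q_l`. Abel summation gives
`∑_{l ≤ n} l q_l = ∑_{k < n} (F n - F k)`. Since `0 ≤ q_l ≤ p`, we have `F k ≤ k p`, while
`F L ≥ L' p` by the choice of `L'`; hence the `k`-th term of the Abel sum for `q` is at least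
`(L' - k) p` when `k < L'`, and nonnegative otherwise. The Abel sum of the constant `p` over
`[1, L']` is exactly `∑_{k < L'} (L' - k) p`.
-/

open Finset

theorem sum_Icc_natCast_mul_eq_sum_range_sub {R : Type*} [CommRing R] (f : ℕ → R) (n : ℕ) :
    ∑ l ∈ Icc 1 n, (l : R) * f l =
      ∑ k ∈ range n, (∑ l ∈ Icc 1 n, f l - ∑ l ∈ Icc 1 k, f l) := by
  induction n with
  | zero => simp
  | succ n ih =>
    rw [sum_range_succ, sum_Icc_succ_top (by omega), sum_Icc_succ_top (by omega), ih]
    simp only [add_sub_right_comm _ (f (n + 1)), sum_add_distrib, sum_const, card_range,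
      nsmul_eq_mul]
    push_cast
    ring

theorem sum_Icc_natCast {K : Type*} [Field K] [CharZero K] (n : ℕ) :
    ∑ l ∈ Icc 1 n, (l : K) = n * (n + 1) / 2 := by
  induction n with
  | zero => simp
  | succ n ih =>
    rw [sum_Icc_succ_top (by omega), ih]
    push_cast
    ring

section Ordered

variable {R : Type*} [CommRing R] [LinearOrder R] [IsStrictOrderedRing R]

theorem sum_Icc_le_natCast_mul {f : ℕ → R} {p : R} {k : ℕ} (hfp : ∀ l ∈ Icc 1 k, f l ≤ p) :
    ∑ l ∈ Icc 1 k, f l ≤ k * p := by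
  simpa using sum_le_card_nsmul (Icc 1 k) f p hfp

/-- The sum `∑ l f_l` over `[1, n]` with `0 ≤ f ≤ p` is smallest when the mass of `f` is packed
into the first indices at the maximal height `p`. -/
theorem sum_Icc_natCast_mul_le_of_mass_le {f : ℕ → R} {n m : ℕ} {p : R} (hp : 0 < p)
    (hf0 : ∀ l ∈ Icc 1 n, 0 ≤ f l) (hfp : ∀ l ∈ Icc 1 n, f l ≤ p)
    (hm : m * p ≤ ∑ l ∈ Icc 1 n, f l) :
    ∑ l ∈ Icc 1 m, (l : R) * p ≤ ∑ l ∈ Icc 1 n, (l : R) * f l := by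
  set S := ∑ l ∈ Icc 1 n, f l
  have partial_le (k : ℕ) (hk : k ≤ n) : ∑ l ∈ Icc 1 k, f l ≤ k * p :=
    sum_Icc_le_natCast_mul fun l hl => hfp l (Icc_subset_Icc_right hk hl)
  have partial_le_total (k : ℕ) (hk : k ≤ n) : ∑ l ∈ Icc 1 k, f l ≤ S :=
    sum_le_sum_of_subset_of_nonneg (Icc_subset_Icc_right hk) fun l hl _ => hf0 l hl
  have hmn : m ≤ n := by
    exact_mod_cast le_of_mul_le_mul_right (hm.trans (partial_le n le_rfl)) hp
  rw [sum_Icc_natCast_mul_eq_sum_range_sub, sum_Icc_natCast_mul_eq_sum_range_sub]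
  calc ∑ k ∈ range m, (∑ l ∈ Icc 1 m, p - ∑ l ∈ Icc 1 k, p)
      ≤ ∑ k ∈ range m, (S - ∑ l ∈ Icc 1 k, f l) := by
        refine sum_le_sum fun k hk => ?_
        have hkm : k < m := mem_range.1 hk
        simp only [sum_const, Nat.card_Icc, add_tsub_cancel_right, nsmul_eq_mul]
        linarith [partial_le k (by omega)]
    _ ≤ ∑ k ∈ range n, (S - ∑ l ∈ Icc 1 k, f l) :=
        sum_le_sum_of_subset_of_nonneg (range_subset_range.2 hmn) fun k hk _ =>
          sub_nonneg.2 (partial_le_total k (mem_range.1 hk).le)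

end Ordered

theorem stmt9_general (L : ℕ) (q : ℕ → ℝ)
    (hmono : ∀ l, 1 ≤ l → l + 1 ≤ L → q (l + 1) ≤ q l)
    (hlast : 0 ≤ q L)
    (p : ℝ) (hp : 0 < p) (hp1 : q 1 ≤ p)
    (L' : ℕ) (hL' : L' = ⌊(∑ l ∈ Finset.Icc 1 L, q l) / p⌋₊) :
    (∑ l ∈ Finset.Icc 1 L', (l : ℝ) * p ≤ ∑ l ∈ Finset.Icc 1 L, (l : ℝ) * q l) ∧
    ∑ l ∈ Finset.Icc 1 L', (l : ℝ) * p = p * L' * (L' + 1) / 2 := by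
  have hanti : AntitoneOn q (Set.Icc 1 L) :=
    antitoneOn_of_add_one_le Set.ordConnected_Icc fun l _ hl hl1 => hmono l hl.1 hl1.2
  have hq0 : ∀ l ∈ Icc 1 L, 0 ≤ q l := by
    intro l hl
    obtain ⟨h1l, hlL⟩ := mem_Icc.1 hl
    exact hlast.trans (hanti ⟨h1l, hlL⟩ ⟨h1l.trans hlL, le_rfl⟩ hlL)
  have hqp : ∀ l ∈ Icc 1 L, q l ≤ p := by
    intro l hl
    obtain ⟨h1l, hlL⟩ := mem_Icc.1 hl
    exact (hanti ⟨le_rfl, h1l.trans hlL⟩ ⟨h1l, hlL⟩ h1l).trans hp1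
  have hmass : L' * p ≤ ∑ l ∈ Icc 1 L, q l := by
    rw [hL', ← le_div_iff₀ hp]
    exact Nat.floor_le (div_nonneg (sum_nonneg hq0) hp.le)
  refine ⟨sum_Icc_natCast_mul_le_of_mass_le hp hq0 hqp hmass, ?_⟩
  rw [← sum_mul, sum_Icc_natCast]
  ring

/-- Let `p_1 ≥ p_2 ≥ … ≥ p_L ≥ 0`, let `p ≥ p_1` with `p > 0`, and let
`L' = ⌊(∑_{ℓ=1}^L p_ℓ)/p⌋`. Then `∑_{ℓ=1}^L ℓ·p_ℓ ≥ ∑_{ℓ=1}^{L'} ℓ·p`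
(and the right-hand side equals `p·L'(L'+1)/2`). -/
theorem stmt9 (L : ℕ) (hL : 1 ≤ L) (q : ℕ → ℝ)
    (hmono : ∀ l, 1 ≤ l → l + 1 ≤ L → q (l + 1) ≤ q l)
    (hlast : 0 ≤ q L)
    (p : ℝ) (hp : 0 < p) (hp1 : q 1 ≤ p)
    (L' : ℕ) (hL' : L' = ⌊(∑ l ∈ Finset.Icc 1 L, q l) / p⌋₊) :
    (∑ l ∈ Finset.Icc 1 L', (l : ℝ) * p ≤ ∑ l ∈ Finset.Icc 1 L, (l : ℝ) * q l) ∧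
    ∑ l ∈ Finset.Icc 1 L', (l : ℝ) * p = p * L' * (L' + 1) / 2 :=
  stmt9_general L q hmono hlast p hp hp1 L' hL'
end
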